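/- arXiv:1812.11041 — 2 statements merged into one kernel-verified Lean document; each statement's English description precedes it below -/
import Mathlib

section
/- Let a, b : ℕ → ℝ with a 0 = 1 and a n > 0 for n ≥ 1. For every control f : ℕ → ℝ, all n ≥ 1 and all t ≥ 1, the solution of the semi-infinite discrete-time dynamical system satisfies the Duhamel-type representation u^f_{n,t} = ∑_{k=0}^{t−1} f_k · u^δ_{n,t−k}, where u^δ is the solution corresponding to the control δ = (1,0,0,…). -/
/-- `u` is the solution of the semi-infinite discrete-time dynamical system with
coefficients `a`, `b` and boundary control `f`. -/
def IsSolU (a b f : ℕ → ℝ) (u : ℕ → ℕ → ℝ) : Prop :=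
  (∀ n, 1 ≤ n → u n 0 = 0) ∧
  (∀ t, u 0 t = f t) ∧
  (∀ n t, 1 ≤ n →
    u n (t + 1) + u n (t - 1) - a n * u (n + 1) t - a (n - 1) * u (n - 1) t
      - b n * u n t = 0)

/-- The boundary control `δ = (1,0,0,…)`. -/
def deltaCtrl : ℕ → ℝ := fun t => if t = 0 then 1 else 0

/-
Solutions are determined by their control, since the recurrence computes time `t + 1` from
times `t` and `t - 1`. The system is linear and time-invariant, and `u^δ` vanishes at time `0`
off the boundary, so convolving `u^δ` in time with `f` again gives a solution, whose boundary
values are `f * δ = f`. Hence it is `u^f`.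
-/

open Finset

def causalConv (f g : ℕ → ℝ) (t : ℕ) : ℝ :=
  ∑ k ∈ range (t + 1), f k * g (t - k)

section causalConv

variable {f g : ℕ → ℝ}

theorem causalConv_zero : causalConv f g 0 = f 0 * g 0 := by
  simp [causalConv]

theorem causalConv_deltaCtrl : causalConv f deltaCtrl = f := by
  funext t
  rw [causalConv, sum_eq_single_of_mem t (self_mem_range_succ t)]
  · simp [deltaCtrl]
  · intro k hk hkt
    have : t - k ≠ 0 := by have := mem_range.mp hk; omega
    simp [deltaCtrl, this]

theorem causalConv_eq_sum_range (hg : g 0 = 0) (t : ℕ) :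
    causalConv f g t = ∑ k ∈ range t, f k * g (t - k) := by
  simp [causalConv, sum_range_succ, hg]

theorem causalConv_succ (hg : g 0 = 0) (t : ℕ) :
    causalConv f g (t + 1) = ∑ k ∈ range (t + 1), f k * g (t - k + 1) := by
  rw [causalConv, sum_range_succ, Nat.sub_self, hg, mul_zero, add_zero]
  refine sum_congr rfl fun k hk => ?_
  rw [Nat.sub_add_comm (mem_range_succ_iff.mp hk)]

theorem causalConv_pred (hg : g 0 = 0) (t : ℕ) :
    causalConv f g (t - 1) = ∑ k ∈ range (t + 1), f k * g (t - k - 1) := by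
  rcases t with _ | t
  · simp [causalConv]
  · rw [sum_range_succ, Nat.sub_self, Nat.zero_sub, hg, mul_zero, add_zero, causalConv,
      Nat.add_sub_cancel]
    refine sum_congr rfl fun k hk => ?_
    congr 2
    omega

end causalConv

namespace IsSolU

variable {a b f : ℕ → ℝ} {u v : ℕ → ℕ → ℝ}

theorem unique (hu : IsSolU a b f u) (hv : IsSolU a b f v) : u = v := by
  suffices h : ∀ t n, u n t = v n t from funext fun n => funext fun t => h t n
  intro t
  induction t using Nat.strong_induction_on with
  | _ t ih =>
    rintro (_ | n)
    · rw [hu.2.1, hv.2.1]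
    rcases t with _ | t
    · rw [hu.1 _ n.succ_pos, hv.1 _ n.succ_pos]
    have hu' := hu.2.2 (n + 1) t n.succ_pos
    have hv' := hv.2.2 (n + 1) t n.succ_pos
    simp only [Nat.add_sub_cancel] at hu' hv'
    rw [ih t (by omega), ih t (by omega), ih t (by omega), ih (t - 1) (by omega)] at hu'
    linarith

theorem causalConv_left {h : ℕ → ℝ} (hu : IsSolU a b h u) (f : ℕ → ℝ) :
    IsSolU a b (causalConv f h) (fun n => causalConv f (u n)) := by
  refine ⟨fun n hn => ?_, fun t => ?_, fun n t hn => ?_⟩ <;> dsimp only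
  · rw [causalConv_zero, hu.1 n hn, mul_zero]
  · rw [show u 0 = h from funext hu.2.1]
  · have hn0 := hu.1 n hn
    rw [causalConv_succ hn0, causalConv_pred hn0]
    simp only [causalConv, mul_sum, ← sum_add_distrib, ← sum_sub_distrib]
    refine sum_eq_zero fun k _ => ?_
    linear_combination f k * hu.2.2 n (t - k) hn

end IsSolU

theorem duhamel_semiinfinite_general
    (a b : ℕ → ℝ)
    (f : ℕ → ℝ) (u uδ : ℕ → ℕ → ℝ)
    (hu : IsSolU a b f u) (huδ : IsSolU a b deltaCtrl uδ) :
    ∀ n t : ℕ, 1 ≤ n → 1 ≤ t →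
      u n t = ∑ k ∈ Finset.range t, f k * uδ n (t - k) := by
  intro n t hn _
  have hconv := huδ.causalConv_left f
  rw [causalConv_deltaCtrl] at hconv
  rw [hu.unique hconv]
  exact causalConv_eq_sum_range (huδ.1 n hn) t

/-- Duhamel-type representation for the semi-infinite system:
`u^f_{n,t} = ∑_{k=0}^{t-1} f_k u^δ_{n,t-k}`. -/
theorem duhamel_semiinfinite
    (a b : ℕ → ℝ) (ha0 : a 0 = 1) (hapos : ∀ n, 1 ≤ n → 0 < a n)
    (f : ℕ → ℝ) (u uδ : ℕ → ℕ → ℝ)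
    (hu : IsSolU a b f u) (huδ : IsSolU a b deltaCtrl uδ) :
    ∀ n t : ℕ, 1 ≤ n → 1 ≤ t →
      u n t = ∑ k ∈ Finset.range t, f k * uδ n (t - k) :=
  duhamel_semiinfinite_general a b f u uδ hu huδ
end

section
/- Let B ≥ 1 and let a, b : ℕ → ℝ satisfy a 0 = 1, a n > 0 and max(a n, |b n|) ≤ B for all n ≥ 1. Then the solution of the semi-infinite discrete-time dynamical system with control δ satisfies |u^δ_{n,t}| ≤ (3B+1)^t for all n ≥ 1 and t ≥ 0. -/
theorem IsSolU.succ_eq {a b f : ℕ → ℝ} {u : ℕ → ℕ → ℝ} (hu : IsSolU a b f u) {n : ℕ}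
    (hn : 1 ≤ n) (t : ℕ) :
    u n (t + 1) = a n * u (n + 1) t + a (n - 1) * u (n - 1) t + b n * u n t - u n (t - 1) := by
  linarith [hu.2.2 n t hn]

theorem abs_mul_add_mul_add_mul_sub_le {α β γ x y z w B M : ℝ} (hα : |α| ≤ B) (hβ : |β| ≤ B)
    (hγ : |γ| ≤ B) (hx : |x| ≤ M) (hy : |y| ≤ M) (hz : |z| ≤ M) (hw : |w| ≤ M) :
    |α * x + β * y + γ * z - w| ≤ (3 * B + 1) * M := by
  have hB : 0 ≤ B := (abs_nonneg α).trans hα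
  calc |α * x + β * y + γ * z - w| ≤ |α| * |x| + |β| * |y| + |γ| * |z| + |w| := by
        simp only [← abs_mul]
        linarith [abs_sub (α * x + β * y + γ * z) w, abs_add_three (α * x) (β * y) (γ * z)]
    _ ≤ B * M + B * M + B * M + M := by gcongr
    _ = (3 * B + 1) * M := by ring

theorem IsSolU.abs_le_pow {a b f : ℕ → ℝ} {u : ℕ → ℕ → ℝ} {B : ℝ} (hu : IsSolU a b f u)
    (ha : ∀ n, |a n| ≤ B) (hb : ∀ n, 1 ≤ n → |b n| ≤ B) (hf : ∀ t, |f t| ≤ (3 * B + 1) ^ t) :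
    ∀ t n, |u n t| ≤ (3 * B + 1) ^ t := by
  have hC : 1 ≤ 3 * B + 1 := by linarith [(abs_nonneg (a 0)).trans (ha 0)]
  intro t
  induction t using Nat.strong_induction_on with
  | _ t ih =>
  intro n
  rcases Nat.eq_zero_or_pos n with rfl | hn
  · rw [hu.2.1]
    exact hf t
  cases t with
  | zero => simp [hu.1 n hn]
  | succ t =>
    have hcur : ∀ m, |u m t| ≤ (3 * B + 1) ^ t := ih t (by omega)
    have hprev : |u n (t - 1)| ≤ (3 * B + 1) ^ t :=
      (ih (t - 1) (by omega) n).trans (pow_le_pow_right₀ hC (Nat.sub_le t 1))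
    rw [hu.succ_eq hn, pow_succ']
    exact abs_mul_add_mul_add_mul_sub_le (ha n) (ha _) (hb n hn) (hcur _) (hcur _) (hcur _) hprev

theorem abs_deltaCtrl_le_one (t : ℕ) : |deltaCtrl t| ≤ 1 := by
  unfold deltaCtrl
  split_ifs <;> simp

/-- Exponential bound on the solution of the semi-infinite system with control δ:
`|u^δ_{n,t}| ≤ (3B+1)^t`. -/
theorem delta_solution_bound_semiinfinite
    (B : ℝ) (hB : 1 ≤ B) (a b : ℕ → ℝ) (ha0 : a 0 = 1)
    (hapos : ∀ n, 1 ≤ n → 0 < a n)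
    (hbound : ∀ n, 1 ≤ n → max (a n) |b n| ≤ B)
    (u : ℕ → ℕ → ℝ) (hu : IsSolU a b deltaCtrl u) :
    ∀ n t : ℕ, 1 ≤ n → |u n t| ≤ (3 * B + 1) ^ t := by
  have ha : ∀ n, |a n| ≤ B := by
    rintro (_ | n)
    · simpa [ha0] using hB
    · rw [abs_of_pos (hapos _ n.succ_pos)]
      exact (le_max_left _ _).trans (hbound _ n.succ_pos)
  have hb : ∀ n, 1 ≤ n → |b n| ≤ B := fun n hn => (le_max_right _ _).trans (hbound n hn)
  have hδ : ∀ t, |deltaCtrl t| ≤ (3 * B + 1) ^ t := fun t =>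
    (abs_deltaCtrl_le_one t).trans (one_le_pow₀ (by linarith))
  intro n t _
  exact hu.abs_le_pow ha hb hδ t n
end
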